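/- Let U and Y be complex Hilbert spaces, F a closed subspace of U, and ω = (ω₁, ω₂) : F → Y ⊕ U a contraction. Suppose that either ω₁ is a strict contraction (‖ω₁‖ < 1) or U is finite-dimensional. Then the operator ω₁ (Π_F ω₂)ⁿ : F → Y is a co-isometry for every integer n ≥ 0 if and only if Y = {0}. -/

import Mathlib

/-!
Write `A = Π_F ω₂` and `Tₙ = ω₁ Aⁿ`. Since `‖ω₁ f‖² + ‖A f‖² ≤ ‖f‖²`, telescoping gives
`∑_{j ≤ n} ‖ω₁ Aʲ f‖² ≤ ‖f‖²`. If `Tₙ` is a co-isometry and `y ≠ 0`, then `fₙ = Tₙ* y` has norm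
`‖y‖` while its last term `‖Tₙ fₙ‖² = ‖y‖²` already exhausts the bound, so `T_k fₙ = 0` for `k < n`,
i.e. `⟪f_k, fₙ⟫ = ⟪y, T_k fₙ⟫ = 0`. Thus `(fₙ)` is an infinite orthogonal family of nonzero vectors,
impossible when `U` is finite-dimensional; and when `‖ω₁‖ < 1`, already `T₀ = ω₁` cannot be a
co-isometry onto a nonzero space.
-/

open ContinuousLinearMap
open scoped InnerProductSpace

section Energy

variable {𝕜 E Y : Type*} [NormedField 𝕜] [SeminormedAddCommGroup E] [NormedSpace 𝕜 E]
  [SeminormedAddCommGroup Y] [NormedSpace 𝕜 Y] {C : E →L[𝕜] Y} {B : E →L[𝕜] E}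

theorem norm_pow_apply_sq_add_sum_le (hCB : ∀ x, ‖C x‖ ^ 2 + ‖B x‖ ^ 2 ≤ ‖x‖ ^ 2)
    (x : E) (n : ℕ) :
    ‖(B ^ n) x‖ ^ 2 + ∑ j ∈ Finset.range n, ‖C ((B ^ j) x)‖ ^ 2 ≤ ‖x‖ ^ 2 := by
  induction n with
  | zero => simp
  | succ n ih =>
    have hstep := hCB ((B ^ n) x)
    rw [Finset.sum_range_succ, pow_succ' B n, mul_def, comp_apply]
    linarith

theorem sum_range_succ_norm_sq_le (hCB : ∀ x, ‖C x‖ ^ 2 + ‖B x‖ ^ 2 ≤ ‖x‖ ^ 2)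
    (x : E) (n : ℕ) :
    ∑ j ∈ Finset.range (n + 1), ‖C ((B ^ j) x)‖ ^ 2 ≤ ‖x‖ ^ 2 := by
  have hlast : ‖C ((B ^ n) x)‖ ^ 2 ≤ ‖(B ^ n) x‖ ^ 2 := by
    nlinarith [hCB ((B ^ n) x), sq_nonneg ‖B ((B ^ n) x)‖]
  rw [Finset.sum_range_succ]
  linarith [norm_pow_apply_sq_add_sum_le hCB x n]

end Energy

section Coisometry

variable {𝕜 E Y : Type*} [RCLike 𝕜] [NormedAddCommGroup E] [InnerProductSpace 𝕜 E]
  [CompleteSpace E] [NormedAddCommGroup Y] [InnerProductSpace 𝕜 Y] [CompleteSpace Y]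

theorem norm_adjoint_apply_of_comp_adjoint_eq_one {T : E →L[𝕜] Y} (hT : T ∘L T.adjoint = 1)
    (y : Y) : ‖T.adjoint y‖ = ‖y‖ := by
  have h : ‖T.adjoint y‖ ^ 2 = ‖y‖ ^ 2 := by
    rw [← inner_self_eq_norm_sq (𝕜 := 𝕜), ← inner_self_eq_norm_sq (𝕜 := 𝕜), adjoint_inner_left,
      ← comp_apply, hT, one_apply_eq_self]
  exact (pow_left_inj₀ (norm_nonneg _) (norm_nonneg _) two_ne_zero).1 h

theorem one_le_norm_of_comp_adjoint_eq_one [Nontrivial Y] {T : E →L[𝕜] Y}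
    (hT : T ∘L T.adjoint = 1) : 1 ≤ ‖T‖ := by
  obtain ⟨y, hy⟩ := exists_ne (0 : Y)
  have h := T.le_opNorm (T.adjoint y)
  rw [← comp_apply, hT, one_apply_eq_self, norm_adjoint_apply_of_comp_adjoint_eq_one hT] at h
  exact one_le_of_le_mul_right₀ (norm_pos_iff.2 hy) h

variable {C : E →L[𝕜] Y} {B : E →L[𝕜] E}

theorem comp_pow_apply_adjoint_eq_zero (hCB : ∀ x, ‖C x‖ ^ 2 + ‖B x‖ ^ 2 ≤ ‖x‖ ^ 2)
    {n : ℕ} (hn : (C ∘L B ^ n) ∘L (C ∘L B ^ n).adjoint = 1) (y : Y) {k : ℕ} (hk : k < n) :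
    (C ∘L B ^ k) ((C ∘L B ^ n).adjoint y) = 0 := by
  set x := (C ∘L B ^ n).adjoint y
  have hx : ‖x‖ = ‖y‖ := norm_adjoint_apply_of_comp_adjoint_eq_one hn y
  have hlast : C ((B ^ n) x) = y := by
    rw [← comp_apply, ← comp_apply, hn, one_apply_eq_self]
  have hsum := sum_range_succ_norm_sq_le hCB x n
  rw [Finset.sum_range_succ, hlast, hx, add_le_iff_nonpos_left] at hsum
  have hzero := (Finset.sum_eq_zero_iff_of_nonneg fun j _ => sq_nonneg ‖C ((B ^ j) x)‖).1
    (le_antisymm hsum (Finset.sum_nonneg fun j _ => sq_nonneg _)) k (Finset.mem_range.2 hk)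
  simpa using hzero

theorem linearIndependent_adjoint_comp_pow_apply
    (hCB : ∀ x, ‖C x‖ ^ 2 + ‖B x‖ ^ 2 ≤ ‖x‖ ^ 2)
    (hco : ∀ n : ℕ, (C ∘L B ^ n) ∘L (C ∘L B ^ n).adjoint = 1) {y : Y} (hy : y ≠ 0) :
    LinearIndependent 𝕜 fun n : ℕ => (C ∘L B ^ n).adjoint y := by
  refine linearIndependent_of_ne_zero_of_inner_eq_zero (fun n => ?_) ?_
  · rwa [← norm_ne_zero_iff, norm_adjoint_apply_of_comp_adjoint_eq_one (hco n), norm_ne_zero_iff]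
  · have horth : ∀ {k n : ℕ}, k < n →
        ⟪(C ∘L B ^ k).adjoint y, (C ∘L B ^ n).adjoint y⟫_𝕜 = 0 := by
      intro k n hk
      rw [adjoint_inner_left, comp_pow_apply_adjoint_eq_zero hCB (hco n) y hk, inner_zero_right]
    intro k n hkn
    rcases hkn.lt_or_gt with hk | hk
    · exact horth hk
    · rw [← inner_conj_symm, horth hk, map_zero]

end Coisometry

theorem stmt_10_general
    {U Y : Type*}
    [NormedAddCommGroup U] [InnerProductSpace ℂ U]
    [NormedAddCommGroup Y] [InnerProductSpace ℂ Y] [CompleteSpace Y]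
    (F : Submodule ℂ U) [CompleteSpace F]
    (ω₁ : F →L[ℂ] Y) (ω₂ : F →L[ℂ] U)
    (hcontr : ∀ f : F, ‖ω₁ f‖ ^ 2 + ‖ω₂ f‖ ^ 2 ≤ ‖f‖ ^ 2)
    (hyp : ‖ω₁‖ < 1 ∨ FiniteDimensional ℂ U) :
    (∀ n : ℕ,
        (ω₁.comp (((F.orthogonalProjection).comp ω₂) ^ n)).comp
          (ω₁.comp (((F.orthogonalProjection).comp ω₂) ^ n)).adjoint = 1) ↔
      (∀ y : Y, y = 0) := by
  have hstep (f : F) : ‖ω₁ f‖ ^ 2 + ‖(F.orthogonalProjectionOnto ∘L ω₂) f‖ ^ 2 ≤ ‖f‖ ^ 2 := by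
    grw [comp_apply, F.norm_orthogonalProjectionOnto_apply_le]
    exact hcontr f
  refine ⟨fun hco => ?_, fun hY n => ext fun y => (hY _).trans (hY _).symm⟩
  by_contra! hY
  obtain ⟨y, hy⟩ := hY
  rcases hyp with hlt | hfin
  · have : Nontrivial Y := ⟨y, 0, hy⟩
    have h0 := hco 0
    rw [pow_zero, one_def, comp_id] at h0
    exact (one_le_norm_of_comp_adjoint_eq_one h0).not_gt hlt
  · exact Module.Finite.not_linearIndependent_of_infinite _
      (linearIndependent_adjoint_comp_pow_apply hstep hco hy)

/-- if `ω₁` is a strict contraction or `U` is finite dimensional, then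
`ω₁ (Π_F ω₂)ⁿ` is a co-isometry for every `n ≥ 0` iff `Y = {0}`. -/
theorem stmt_10
    {U Y : Type*}
    [NormedAddCommGroup U] [InnerProductSpace ℂ U] [CompleteSpace U]
    [NormedAddCommGroup Y] [InnerProductSpace ℂ Y] [CompleteSpace Y]
    (F : Submodule ℂ U) [CompleteSpace F]
    (ω₁ : F →L[ℂ] Y) (ω₂ : F →L[ℂ] U)
    (hcontr : ∀ f : F, ‖ω₁ f‖ ^ 2 + ‖ω₂ f‖ ^ 2 ≤ ‖f‖ ^ 2)
    (hyp : ‖ω₁‖ < 1 ∨ FiniteDimensional ℂ U) :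
    (∀ n : ℕ,
        (ω₁.comp (((F.orthogonalProjection).comp ω₂) ^ n)).comp
          (ω₁.comp (((F.orthogonalProjection).comp ω₂) ^ n)).adjoint = 1) ↔
      (∀ y : Y, y = 0) :=
  stmt_10_general F ω₁ ω₂ hcontr hyp
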